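/- Gauge-transformed equation of motion: Let q: ℝ×ℝ → ℂ be a smooth solution of the NLS equation, let λ₀ ∈ ℝ, and let S: ℝ×ℝ → M₂(ℂ) be a smooth, everywhere invertible matrix solution of the NLS Lax pair at (q, λ₀). Then the matrix Γ = S⁻¹ σ₃ S satisfies the translated Heisenberg equation ∂_t Γ = −( 4λ₀ ∂_x Γ + (1/(2i)) [Γ, ∂_x² Γ] ). In particular, when λ₀ = 0, Γ satisfies the Heisenberg equation in matrix form i∂_t Γ = −(1/2)[Γ, ∂_x² Γ]. -/

import Mathlib

open Matrix

noncomputable section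

/-- The Pauli matrix `σ₃ = diag(1, −1)`. -/
def sigma3 : Matrix (Fin 2) (Fin 2) ℂ := !![1, 0; 0, -1]

/-- The matrix `U = [[0, iq],[i·conj(q), 0]]` of the NLS Lax pair. -/
def Umat (q : ℝ → ℝ → ℂ) (t x : ℝ) : Matrix (Fin 2) (Fin 2) ℂ :=
  !![0, Complex.I * q t x; Complex.I * (starRingEnd ℂ) (q t x), 0]

/-- The matrix `V = −i|q|²σ₃ + [[0, ∂_x q],[−∂_x conj(q), 0]]` of the NLS Lax pair. -/
def Vmat (q : ℝ → ℝ → ℂ) (t x : ℝ) : Matrix (Fin 2) (Fin 2) ℂ :=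
  (-(Complex.I * (Complex.normSq (q t x) : ℂ))) • sigma3 +
    !![0, deriv (fun y => q t y) x;
       -(deriv (fun y => (starRingEnd ℂ) (q t y)) x), 0]

/-- `φ` solves the NLS Lax pair at `(q, λ)`:
`∂_x φ = (iλσ₃ + U)φ` and `∂_t φ = −(2iλ²σ₃ + 2λU + V)φ`. -/
def NLSLaxSol (q : ℝ → ℝ → ℂ) (lam : ℂ) (φ : ℝ → ℝ → Fin 2 → ℂ) : Prop :=
  (∀ t x, deriv (fun y => φ t y) x =
    ((Complex.I * lam) • sigma3 + Umat q t x).mulVec (φ t x)) ∧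
  (∀ t x, deriv (fun s => φ s x) t =
    (-((2 * Complex.I * lam ^ 2) • sigma3 + (2 * lam) • Umat q t x + Vmat q t x)).mulVec
      (φ t x))

/-- Entrywise spatial derivative of a matrix-valued function. -/
def matDx (A : ℝ → ℝ → Matrix (Fin 2) (Fin 2) ℂ) (t x : ℝ) : Matrix (Fin 2) (Fin 2) ℂ :=
  Matrix.of fun i j => deriv (fun y => A t y i j) x

/-- Entrywise second spatial derivative of a matrix-valued function. -/
def matDxx (A : ℝ → ℝ → Matrix (Fin 2) (Fin 2) ℂ) (t x : ℝ) : Matrix (Fin 2) (Fin 2) ℂ :=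
  Matrix.of fun i j => deriv (fun y => deriv (fun z => A t z i j) y) x

/-- Entrywise temporal derivative of a matrix-valued function. -/
def matDt (A : ℝ → ℝ → Matrix (Fin 2) (Fin 2) ℂ) (t x : ℝ) : Matrix (Fin 2) (Fin 2) ℂ :=
  Matrix.of fun i j => deriv (fun s => A s x i j) t


/-- Entrywise derivative of a one-parameter matrix path. -/
def Dm (f : ℝ → Matrix (Fin 2) (Fin 2) ℂ) (x : ℝ) : Matrix (Fin 2) (Fin 2) ℂ :=
  Matrix.of fun i j => deriv (fun y => f y i j) x

lemma entry_mul_diff {f g : ℝ → Matrix (Fin 2) (Fin 2) ℂ} {x : ℝ}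
    (hf : ∀ i j, DifferentiableAt ℝ (fun y => f y i j) x)
    (hg : ∀ i j, DifferentiableAt ℝ (fun y => g y i j) x) (i j : Fin 2) :
    DifferentiableAt ℝ (fun y => (f y * g y) i j) x := by
  have h : (fun y => (f y * g y) i j) = fun y => f y i 0 * g y 0 j + f y i 1 * g y 1 j := by
    funext y; simp [Matrix.mul_apply, Fin.sum_univ_two]
  rw [h]
  exact ((hf i 0).mul (hg 0 j)).add ((hf i 1).mul (hg 1 j))

lemma Dm_mul {f g : ℝ → Matrix (Fin 2) (Fin 2) ℂ} {x : ℝ}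
    (hf : ∀ i j, DifferentiableAt ℝ (fun y => f y i j) x)
    (hg : ∀ i j, DifferentiableAt ℝ (fun y => g y i j) x) :
    Dm (fun y => f y * g y) x = Dm f x * g x + f x * Dm g x := by
  ext i j
  have h : (fun y => (f y * g y) i j) = fun y => f y i 0 * g y 0 j + f y i 1 * g y 1 j := by
    funext y; simp [Matrix.mul_apply, Fin.sum_univ_two]
  simp only [Dm, Matrix.of_apply, Matrix.add_apply, Matrix.mul_apply, Fin.sum_univ_two]
  have hd := ((((hf i 0).hasDerivAt.mul (hg 0 j).hasDerivAt)).add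
    (((hf i 1).hasDerivAt.mul (hg 1 j).hasDerivAt))).deriv
  refine hd.trans ?_
  ring

lemma Dm_const (A : Matrix (Fin 2) (Fin 2) ℂ) (x : ℝ) : Dm (fun _ => A) x = 0 := by
  ext i j; simp [Dm]

lemma inv_entry_diff {f : ℝ → Matrix (Fin 2) (Fin 2) ℂ} {x : ℝ}
    (hf : ∀ i j, DifferentiableAt ℝ (fun y => f y i j) x)
    (hu : ∀ y, IsUnit (f y)) (i j : Fin 2) :
    DifferentiableAt ℝ (fun y => (f y)⁻¹ i j) x := by
  have hdet : ∀ y, (f y).det ≠ 0 := fun y =>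
    ((Matrix.isUnit_iff_isUnit_det (f y)).mp (hu y)).ne_zero
  have hrepr : (fun y => (f y)⁻¹ i j) = fun y => ((f y).det)⁻¹ * (f y).adjugate i j := by
    funext y; rw [Matrix.inv_def]; simp [Ring.inverse_eq_inv']
  rw [hrepr]
  have hdd : DifferentiableAt ℝ (fun y => (f y).det) x := by
    have h : (fun y => (f y).det) = fun y => f y 0 0 * f y 1 1 - f y 0 1 * f y 1 0 :=
      funext fun y => Matrix.det_fin_two _
    rw [h]; exact ((hf 0 0).mul (hf 1 1)).sub ((hf 0 1).mul (hf 1 0))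
  have hadj : DifferentiableAt ℝ (fun y => (f y).adjugate i j) x := by
    have h : (fun y => (f y).adjugate i j)
        = fun y => (!![f y 1 1, -(f y 0 1); -(f y 1 0), f y 0 0] : Matrix (Fin 2) (Fin 2) ℂ) i j :=
      funext fun y => by rw [Matrix.adjugate_fin_two]
    rw [h]
    fin_cases i <;> fin_cases j <;> simp
    · exact hf 1 1
    · exact hf 0 1
    · exact hf 1 0
    · exact hf 0 0
  exact (hdd.inv (hdet x)).mul hadj

lemma Dm_inv {f : ℝ → Matrix (Fin 2) (Fin 2) ℂ} {x : ℝ}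
    (hf : ∀ i j, DifferentiableAt ℝ (fun y => f y i j) x)
    (hu : ∀ y, IsUnit (f y)) :
    Dm (fun y => (f y)⁻¹) x = -((f x)⁻¹ * Dm f x * (f x)⁻¹) := by
  have hud : ∀ y, IsUnit (f y).det := fun y => (Matrix.isUnit_iff_isUnit_det (f y)).mp (hu y)
  have h1 := Dm_mul (fun i j => inv_entry_diff hf hu i j) hf
  have h2 : (fun y => (f y)⁻¹ * f y) = fun _ => (1 : Matrix (Fin 2) (Fin 2) ℂ) :=
    funext fun y => Matrix.nonsing_inv_mul _ (hud y)
  rw [h2, Dm_const] at h1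
  have h3 : Dm (fun y => (f y)⁻¹) x * f x = -((f x)⁻¹ * Dm f x) :=
    eq_neg_of_add_eq_zero_left h1.symm
  calc Dm (fun y => (f y)⁻¹) x
      = Dm (fun y => (f y)⁻¹) x * (f x * (f x)⁻¹) := by
        rw [Matrix.mul_nonsing_inv _ (hud x), mul_one]
    _ = (Dm (fun y => (f y)⁻¹) x * f x) * (f x)⁻¹ := by rw [mul_assoc]
    _ = -((f x)⁻¹ * Dm f x * (f x)⁻¹) := by rw [h3, neg_mul]

lemma Dm_sub {f g : ℝ → Matrix (Fin 2) (Fin 2) ℂ} {x : ℝ}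
    (hf : ∀ i j, DifferentiableAt ℝ (fun y => f y i j) x)
    (hg : ∀ i j, DifferentiableAt ℝ (fun y => g y i j) x) :
    Dm (fun y => f y - g y) x = Dm f x - Dm g x := by
  ext i j
  simp only [Dm, Matrix.of_apply, Matrix.sub_apply]
  exact deriv_sub (hf i j) (hg i j)

lemma Dm_const_add (A : Matrix (Fin 2) (Fin 2) ℂ) (g : ℝ → Matrix (Fin 2) (Fin 2) ℂ) (x : ℝ) :
    Dm (fun y => A + g y) x = Dm g x := by
  ext i j
  simp only [Dm, Matrix.of_apply]
  show deriv (fun y => A i j + g y i j) x = _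
  rw [deriv_const_add]

-- helper defs + lemmas about the Lax matrices
def Am (q : ℝ → ℝ → ℂ) (lam₀ : ℝ) (t x : ℝ) : Matrix (Fin 2) (Fin 2) ℂ :=
  (Complex.I * (lam₀ : ℂ)) • sigma3 + Umat q t x

def Bm (q : ℝ → ℝ → ℂ) (lam₀ : ℝ) (t x : ℝ) : Matrix (Fin 2) (Fin 2) ℂ :=
  -((2 * Complex.I * (lam₀ : ℂ) ^ 2) • sigma3 + (2 * (lam₀ : ℂ)) • Umat q t x + Vmat q t x)

def Cm (q : ℝ → ℝ → ℂ) (lam₀ : ℝ) (t x : ℝ) : Matrix (Fin 2) (Fin 2) ℂ :=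
  sigma3 * Am q lam₀ t x - Am q lam₀ t x * sigma3

def DUm (q : ℝ → ℝ → ℂ) (t x : ℝ) : Matrix (Fin 2) (Fin 2) ℂ :=
  !![0, Complex.I * deriv (fun y => q t y) x;
     Complex.I * deriv (fun y => (starRingEnd ℂ) (q t y)) x, 0]

def Mm (q : ℝ → ℝ → ℂ) (lam₀ : ℝ) (t x : ℝ) : Matrix (Fin 2) (Fin 2) ℂ :=
  -(Am q lam₀ t x * Cm q lam₀ t x) + (sigma3 * DUm q t x - DUm q t x * sigma3) +
    Cm q lam₀ t x * Am q lam₀ t x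

set_option maxHeartbeats 2000000

/-- **Gauge-transformed equation of motion.**
If `q` solves NLS, `λ₀ ∈ ℝ`, and `S` is a smooth everywhere-invertible matrix solution
of the NLS Lax pair at `(q, λ₀)`, then `Γ = S⁻¹σ₃S` satisfies the translated Heisenberg
equation `∂_t Γ = −(4λ₀ ∂_xΓ + (1/(2i))[Γ, ∂_x²Γ])`; in particular when `λ₀ = 0`,
`i∂_tΓ = −(1/2)[Γ, ∂_x²Γ]`. -/
theorem nls_gauge_transformed_heisenberg
    (q : ℝ → ℝ → ℂ) (hq_smooth : ContDiff ℝ (⊤ : ℕ∞) (fun p : ℝ × ℝ => q p.1 p.2))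
    (hq_nls : ∀ t x, Complex.I * deriv (fun s => q s x) t +
      deriv (fun y => deriv (fun z => q t z) y) x +
      2 * (Complex.normSq (q t x) : ℂ) * q t x = 0)
    (lam₀ : ℝ)
    (S : ℝ → ℝ → Matrix (Fin 2) (Fin 2) ℂ)
    (hS_smooth : ∀ i j, ContDiff ℝ (⊤ : ℕ∞) (fun p : ℝ × ℝ => S p.1 p.2 i j))
    (hS_inv : ∀ t x, IsUnit (S t x))
    (hSx : ∀ t x, matDx S t x =
      ((Complex.I * (lam₀ : ℂ)) • sigma3 + Umat q t x) * S t x)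
    (hSt : ∀ t x, matDt S t x =
      -((2 * Complex.I * (lam₀ : ℂ) ^ 2) • sigma3 + (2 * (lam₀ : ℂ)) • Umat q t x +
        Vmat q t x) * S t x)
    (Γ : ℝ → ℝ → Matrix (Fin 2) (Fin 2) ℂ)
    (hΓ : ∀ t x, Γ t x = (S t x)⁻¹ * sigma3 * S t x) :
    (∀ t x, matDt Γ t x =
      -((4 * (lam₀ : ℂ)) • matDx Γ t x +
        (1 / (2 * Complex.I)) • (Γ t x * matDxx Γ t x - matDxx Γ t x * Γ t x))) ∧
    (lam₀ = 0 → ∀ t x, Complex.I • matDt Γ t x =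
      (-(1 / 2 : ℂ)) • (Γ t x * matDxx Γ t x - matDxx Γ t x * Γ t x)) := by
  -- basic differentiability
  have hq_x : ∀ t x, DifferentiableAt ℝ (fun y => q t y) x := fun t x =>
    ((hq_smooth.comp (contDiff_const.prodMk contDiff_id)).differentiable (by simp)).differentiableAt
  have hqc_x : ∀ t x, DifferentiableAt ℝ (fun y => (starRingEnd ℂ) (q t y)) x := fun t x =>
    (hq_x t x).star
  have hS_x : ∀ t x i j, DifferentiableAt ℝ (fun y => S t y i j) x := fun t x i j =>
    (((hS_smooth i j).comp (contDiff_const.prodMk contDiff_id)).differentiable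
      (by simp)).differentiableAt
  have hS_t : ∀ t x i j, DifferentiableAt ℝ (fun s => S s x i j) t := fun t x i j =>
    (((hS_smooth i j).comp (contDiff_id.prodMk contDiff_const)).differentiable
      (by simp)).differentiableAt
  have hU_x : ∀ t x i j, DifferentiableAt ℝ (fun y => Umat q t y i j) x := by
    intro t x i j
    fin_cases i <;> fin_cases j <;> simp only [Umat, Matrix.cons_val', Matrix.cons_val_zero,
      Matrix.cons_val_one, Matrix.head_cons, Matrix.empty_val',
      Matrix.cons_val_fin_one, Matrix.of_apply]
    · exact differentiableAt_const _
    · exact (hq_x t x).const_mul _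
    · exact (hqc_x t x).const_mul _
    · exact differentiableAt_const _
  have hA_x : ∀ t x i j, DifferentiableAt ℝ (fun y => Am q lam₀ t y i j) x := by
    intro t x i j
    have h : (fun y => Am q lam₀ t y i j) =
        fun y => ((Complex.I * (lam₀ : ℂ)) • sigma3) i j + Umat q t y i j := rfl
    rw [h]
    exact (differentiableAt_const _).add (hU_x t x i j)
  have hC_x : ∀ t x i j, DifferentiableAt ℝ (fun y => Cm q lam₀ t y i j) x := by
    intro t x i j
    have h : (fun y => Cm q lam₀ t y i j) =
        fun y => (sigma3 * Am q lam₀ t y) i j - (Am q lam₀ t y * sigma3) i j := rfl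
    rw [h]
    exact (entry_mul_diff (f := fun _ => sigma3) (g := fun y => Am q lam₀ t y)
        (fun _ _ => differentiableAt_const _) (hA_x t x) i j).sub
      (entry_mul_diff (f := fun y => Am q lam₀ t y) (g := fun _ => sigma3)
        (hA_x t x) (fun _ _ => differentiableAt_const _) i j)
  -- derivatives of coefficient matrices
  have hDU : ∀ t x, Dm (fun y => Umat q t y) x = DUm q t x := by
    intro t x
    ext i j
    fin_cases i <;> fin_cases j <;>
      simp only [Dm, DUm, Umat, Matrix.of_apply, Matrix.cons_val', Matrix.cons_val_zero,
        Matrix.cons_val_one, Matrix.head_cons, Matrix.empty_val',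
        Matrix.cons_val_fin_one]
    · simp
    · exact deriv_const_mul _ (hq_x t x)
    · exact deriv_const_mul _ (hqc_x t x)
    · simp
  have hDA : ∀ t x, Dm (fun y => Am q lam₀ t y) x = DUm q t x := by
    intro t x
    have h : (fun y => Am q lam₀ t y) =
        fun y => ((Complex.I * (lam₀ : ℂ)) • sigma3) + Umat q t y := rfl
    rw [h, Dm_const_add, hDU]
  have hDC : ∀ t x, Dm (fun y => Cm q lam₀ t y) x =
      sigma3 * DUm q t x - DUm q t x * sigma3 := by
    intro t x
    have h : (fun y => Cm q lam₀ t y) =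
        fun y => sigma3 * Am q lam₀ t y - Am q lam₀ t y * sigma3 := rfl
    rw [h, Dm_sub (f := fun y => sigma3 * Am q lam₀ t y) (g := fun y => Am q lam₀ t y * sigma3)
        (entry_mul_diff (f := fun _ => sigma3) (g := fun y => Am q lam₀ t y)
          (fun _ _ => differentiableAt_const _) (hA_x t x))
        (entry_mul_diff (f := fun y => Am q lam₀ t y) (g := fun _ => sigma3)
          (hA_x t x) (fun _ _ => differentiableAt_const _)),
      Dm_mul (f := fun _ => sigma3) (g := fun y => Am q lam₀ t y)
        (fun _ _ => differentiableAt_const _) (hA_x t x),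
      Dm_mul (f := fun y => Am q lam₀ t y) (g := fun _ => sigma3)
        (hA_x t x) (fun _ _ => differentiableAt_const _), Dm_const, hDA]
    simp
  -- inverse matrix facts
  have hSdet : ∀ t x, IsUnit (S t x).det := fun t x =>
    (Matrix.isUnit_iff_isUnit_det _).mp (hS_inv t x)
  have hinv_x : ∀ t x i j, DifferentiableAt ℝ (fun y => (S t y)⁻¹ i j) x := fun t x =>
    inv_entry_diff (hS_x t x) (fun y => hS_inv t y)
  have hinv_t : ∀ t x i j, DifferentiableAt ℝ (fun s => (S s x)⁻¹ i j) t := fun t x =>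
    inv_entry_diff (hS_t t x) (fun s => hS_inv s x)
  have hDSx : ∀ t x, Dm (fun y => S t y) x = Am q lam₀ t x * S t x := fun t x => hSx t x
  have hDSt : ∀ t x, Dm (fun s => S s x) t = Bm q lam₀ t x * S t x := fun t x => hSt t x
  have hDinvx : ∀ t x, Dm (fun y => (S t y)⁻¹) x = -((S t x)⁻¹ * Am q lam₀ t x) := by
    intro t x
    rw [Dm_inv (hS_x t x) (fun y => hS_inv t y), hDSx, Matrix.mul_assoc, Matrix.mul_assoc,
      Matrix.mul_nonsing_inv _ (hSdet t x), Matrix.mul_one]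
  have hDinvt : ∀ t x, Dm (fun s => (S s x)⁻¹) t = -((S t x)⁻¹ * Bm q lam₀ t x) := by
    intro t x
    rw [Dm_inv (hS_t t x) (fun s => hS_inv s x), hDSt, Matrix.mul_assoc, Matrix.mul_assoc,
      Matrix.mul_nonsing_inv _ (hSdet t x), Matrix.mul_one]
  -- key formulas
  have key1 : ∀ t x, matDx Γ t x = (S t x)⁻¹ * Cm q lam₀ t x * S t x := by
    intro t x
    have h0 : matDx Γ t x = Dm (fun y => Γ t y) x := rfl
    have hfun : (fun y => Γ t y) = fun y => ((S t y)⁻¹ * sigma3) * S t y :=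
      funext fun y => hΓ t y
    rw [h0, hfun,
      Dm_mul (f := fun y => (S t y)⁻¹ * sigma3) (g := fun y => S t y)
        (entry_mul_diff (f := fun y => (S t y)⁻¹) (g := fun _ => sigma3)
          (hinv_x t x) (fun _ _ => differentiableAt_const _)) (hS_x t x),
      Dm_mul (f := fun y => (S t y)⁻¹) (g := fun _ => sigma3)
        (hinv_x t x) (fun _ _ => differentiableAt_const _), Dm_const, hDinvx, hDSx]
    show _ = (S t x)⁻¹ * (sigma3 * Am q lam₀ t x - Am q lam₀ t x * sigma3) * S t x
    noncomm_ring
  have key2 : ∀ t x, matDxx Γ t x = (S t x)⁻¹ * Mm q lam₀ t x * S t x := by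
    intro t x
    have h0 : matDxx Γ t x = Dm (fun y => matDx Γ t y) x := rfl
    have hfun : (fun y => matDx Γ t y) = fun y => ((S t y)⁻¹ * Cm q lam₀ t y) * S t y :=
      funext fun y => key1 t y
    rw [h0, hfun,
      Dm_mul (f := fun y => (S t y)⁻¹ * Cm q lam₀ t y) (g := fun y => S t y)
        (entry_mul_diff (f := fun y => (S t y)⁻¹) (g := fun y => Cm q lam₀ t y)
          (hinv_x t x) (hC_x t x)) (hS_x t x),
      Dm_mul (f := fun y => (S t y)⁻¹) (g := fun y => Cm q lam₀ t y)
        (hinv_x t x) (hC_x t x), hDinvx, hDC, hDSx]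
    show _ = (S t x)⁻¹ * (-(Am q lam₀ t x * Cm q lam₀ t x) +
      (sigma3 * DUm q t x - DUm q t x * sigma3) + Cm q lam₀ t x * Am q lam₀ t x) * S t x
    noncomm_ring
  have keyT : ∀ t x, matDt Γ t x =
      (S t x)⁻¹ * (sigma3 * Bm q lam₀ t x - Bm q lam₀ t x * sigma3) * S t x := by
    intro t x
    have h0 : matDt Γ t x = Dm (fun s => Γ s x) t := rfl
    have hfun : (fun s => Γ s x) = fun s => ((S s x)⁻¹ * sigma3) * S s x :=
      funext fun s => hΓ s x
    rw [h0, hfun,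
      Dm_mul (f := fun s => (S s x)⁻¹ * sigma3) (g := fun s => S s x)
        (entry_mul_diff (f := fun s => (S s x)⁻¹) (g := fun _ => sigma3)
          (hinv_t t x) (fun _ _ => differentiableAt_const _))
        (fun i j => hS_t t x i j),
      Dm_mul (f := fun s => (S s x)⁻¹) (g := fun _ => sigma3)
        (hinv_t t x) (fun _ _ => differentiableAt_const _), Dm_const, hDinvt, hDSt]
    noncomm_ring
  -- the core pointwise matrix identity
  have hcore : ∀ t x, sigma3 * Bm q lam₀ t x - Bm q lam₀ t x * sigma3 =
      -((4 * (lam₀ : ℂ)) • Cm q lam₀ t x +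
        (1 / (2 * Complex.I)) • (sigma3 * Mm q lam₀ t x - Mm q lam₀ t x * sigma3)) := by
    intro t x
    ext i j
    fin_cases i <;> fin_cases j <;>
      simp only [Am, Bm, Cm, Mm, DUm, sigma3, Umat, Vmat, Matrix.mul_apply,
          Fin.sum_univ_two, Matrix.smul_apply, Matrix.add_apply, Matrix.sub_apply,
          Matrix.neg_apply, smul_eq_mul, Matrix.cons_val', Matrix.cons_val_zero,
          Matrix.cons_val_one, Matrix.head_cons, Matrix.empty_val',
          Matrix.cons_val_fin_one, Matrix.of_apply, Fin.zero_eta, Fin.mk_one]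
    all_goals first
      | (field_simp; ring)
      | field_simp
  -- the main equation
  have main : ∀ t x, matDt Γ t x =
      -((4 * (lam₀ : ℂ)) • matDx Γ t x +
        (1 / (2 * Complex.I)) • (Γ t x * matDxx Γ t x - matDxx Γ t x * Γ t x)) := by
    intro t x
    have hSP : ∀ Z : Matrix (Fin 2) (Fin 2) ℂ, S t x * ((S t x)⁻¹ * Z) = Z := fun Z => by
      rw [← Matrix.mul_assoc, Matrix.mul_nonsing_inv _ (hSdet t x), Matrix.one_mul]
    rw [keyT, key1, key2, hΓ, hcore]
    have e1 : ((S t x)⁻¹ * sigma3 * S t x) * ((S t x)⁻¹ * Mm q lam₀ t x * S t x) =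
        (S t x)⁻¹ * (sigma3 * Mm q lam₀ t x) * S t x := by
      simp only [Matrix.mul_assoc, hSP]
    have e2 : ((S t x)⁻¹ * Mm q lam₀ t x * S t x) * ((S t x)⁻¹ * sigma3 * S t x) =
        (S t x)⁻¹ * (Mm q lam₀ t x * sigma3) * S t x := by
      simp only [Matrix.mul_assoc, hSP]
    rw [e1, e2]
    simp only [Matrix.mul_neg, Matrix.neg_mul, Matrix.mul_add, Matrix.add_mul,
      Matrix.mul_sub, Matrix.sub_mul, Matrix.mul_smul, Matrix.smul_mul, Matrix.mul_assoc]
  refine ⟨main, ?_⟩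
  intro h0 t x
  subst h0
  rw [main t x]
  simp only [Complex.ofReal_zero, mul_zero, zero_smul, zero_add]
  rw [smul_neg, smul_smul, ← neg_smul]
  congr 1
  have hI : Complex.I * (1 / (2 * Complex.I)) = 1 / 2 := by
    field_simp
  rw [hI]
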